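/- Consider a rank-one symbolic recursion B_{n+1} = (B_n s^a)^{m_n} B_n with m_n ≥ 1 for all n ≥ N. Then for every n ≥ N, the word B_{n+1} is a prefix of the periodic infinite sequence (B_N s^a)^∞, i.e., the one-sided infinite word obtained as the limit of the B_n is periodic with period block B_N s^a. -/

import Mathlib

/-! Appending `s^a` turns the recursion into `B_{n+1} s^a = (B_n s^a)^{m_n + 1}`, so by induction
every `B_n s^a` is a power of `B_N s^a`, and `B_n` is a prefix of that power. -/

/-- The two-letter alphabet `{0, s}` used in rank-one constructions. -/
inductive BVSym : Type
  | zero : BVSym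
  | sp : BVSym
  deriving DecidableEq, Inhabited

/-- `wpow w i` is the `i`-fold concatenation of the word `w` with itself. -/
def wpow (w : List BVSym) (i : ℕ) : List BVSym := (List.replicate i w).flatten

lemma wpow_add (w : List BVSym) (i j : ℕ) : wpow w (i + j) = wpow w i ++ wpow w j := by
  rw [wpow, List.replicate_add, List.flatten_append, wpow, wpow]

lemma wpow_one (w : List BVSym) : wpow w 1 = w := by
  simp [wpow]

lemma wpow_wpow (w : List BVSym) (c k : ℕ) : wpow (wpow w c) k = wpow w (c * k) := by
  induction k with
  | zero => rfl
  | succ k ih => rw [wpow_add, ih, wpow_one, ← wpow_add, Nat.mul_succ]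

lemma wpow_append_append_eq_wpow_succ (u s : List BVSym) (k : ℕ) :
    wpow (u ++ s) k ++ u ++ s = wpow (u ++ s) (k + 1) := by
  rw [wpow_add, wpow_one, List.append_assoc]

lemma exists_append_eq_wpow {B : ℕ → List BVSym} {N : ℕ} {s : List BVSym} {m : ℕ → ℕ}
    (hrec : ∀ n ≥ N, B (n + 1) = wpow (B n ++ s) (m n) ++ B n) :
    ∀ n ≥ N, ∃ c, B n ++ s = wpow (B N ++ s) c := by
  intro n hn
  induction n, hn using Nat.le_induction with
  | base => exact ⟨1, (wpow_one _).symm⟩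
  | succ n hn ih =>
    obtain ⟨c, hc⟩ := ih
    refine ⟨c * (m n + 1), ?_⟩
    rw [hrec n hn, wpow_append_append_eq_wpow_succ, hc, wpow_wpow]

theorem rank_one_recursion_periodic_general (B : ℕ → List BVSym) (N : ℕ)
    (a : ℕ) (m : ℕ → ℕ)
    (hrec : ∀ n ≥ N,
      B (n + 1) = wpow (B n ++ List.replicate a BVSym.sp) (m n) ++ B n) :
    ∀ n ≥ N, ∃ k, B (n + 1) <+: wpow (B N ++ List.replicate a BVSym.sp) k := by
  intro n hn
  obtain ⟨c, hc⟩ := exists_append_eq_wpow hrec (n + 1) (Nat.le_succ_of_le hn)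
  exact ⟨c, _, hc⟩

/-- For the recursion `B_{n+1} = (B_n s^a)^{m_n} B_n` with all `m_n ≥ 1`, every
`B_{n+1}` (for `n ≥ N`) is a prefix of the periodic infinite word `(B_N s^a)^∞`. -/
theorem rank_one_recursion_periodic (B : ℕ → List BVSym) (N : ℕ)
    (hBN : B N ≠ []) (a : ℕ) (m : ℕ → ℕ)
    (hm : ∀ n ≥ N, 1 ≤ m n)
    (hrec : ∀ n ≥ N,
      B (n + 1) = wpow (B n ++ List.replicate a BVSym.sp) (m n) ++ B n) :
    ∀ n ≥ N, ∃ k, B (n + 1) <+: wpow (B N ++ List.replicate a BVSym.sp) k :=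
  rank_one_recursion_periodic_general B N a m hrec
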